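/- (Quadratic blowup when joining incomparable simple relations.) Let n ≥ 2 and d ≥ 1, with domain D = {0, 1, …, d}. Let S and T be simple relations on attribute sets Ā_S ⊆ [n] and Ā_T ⊆ [n] respectively. If neither Ā_S ⊆ Ā_T nor Ā_T ⊆ Ā_S, then the natural join S ⋈ T, consisting of all tuples t : Ā_S ∪ Ā_T → D whose restrictions to Ā_S and Ā_T lie in S and T respectively, satisfies |S ⋈ T| ≥ (d + 1)². -/

import Mathlib

open scoped BigOperators

/-- The *simple* relation on attribute set `A ⊆ [n]` over the domain `{0, 1, …, d}`:
all tuples `t : A → {0,…,d}` having at most one nonzero coordinate. -/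
def SimpleRel (n d : ℕ) (A : Finset (Fin n)) : Set ({j : Fin n // j ∈ A} → Fin (d + 1)) :=
  {t | ({j : {j : Fin n // j ∈ A} | t j ≠ 0}).ncard ≤ 1}

/-!
Pick attributes `a ∈ Ā_S \ Ā_T` and `b ∈ Ā_T \ Ā_S`. Every tuple that is `x` at `a`, `y` at `b`
and `0` elsewhere restricts to a tuple of `S` (its only possible nonzero entry on `Ā_S` is at `a`)
and to a tuple of `T` (likewise at `b`), and these `(d + 1)²` tuples are pairwise distinct.
-/

variable {n d : ℕ}

theorem mem_simpleRel_of_ne_zero_imp {A : Finset (Fin n)} {t : {j : Fin n // j ∈ A} → Fin (d + 1)}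
    (a : Fin n) (ht : ∀ j, t j ≠ 0 → j.1 = a) : t ∈ SimpleRel n d A :=
  (Set.ncard_le_one_iff).mpr fun hi hj => Subtype.ext ((ht _ hi).trans (ht _ hj).symm)

def pairTuple (B : Finset (Fin n)) (a b : Fin n) (x y : Fin (d + 1)) :
    {j : Fin n // j ∈ B} → Fin (d + 1) :=
  fun j => if j.1 = a then x else if j.1 = b then y else 0

section pairTuple

variable {B : Finset (Fin n)} {a b : Fin n}

theorem pairTuple_mem_simpleRel_of_notMem_right (hb : b ∉ B) (x y : Fin (d + 1)) :
    pairTuple B a b x y ∈ SimpleRel n d B := by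
  refine mem_simpleRel_of_ne_zero_imp a fun j hj => ?_
  have hjb : j.1 ≠ b := fun h => hb (h ▸ j.2)
  by_contra hja
  simp [pairTuple, hja, hjb] at hj

theorem pairTuple_mem_simpleRel_of_notMem_left (ha : a ∉ B) (x y : Fin (d + 1)) :
    pairTuple B a b x y ∈ SimpleRel n d B := by
  refine mem_simpleRel_of_ne_zero_imp b fun j hj => ?_
  have hja : j.1 ≠ a := fun h => ha (h ▸ j.2)
  by_contra hjb
  simp [pairTuple, hja, hjb] at hj

theorem pairTuple_injective (ha : a ∈ B) (hb : b ∈ B) (hab : a ≠ b) :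
    Function.Injective fun p : Fin (d + 1) × Fin (d + 1) => pairTuple B a b p.1 p.2 := by
  intro p q h
  have hpa := congrFun h ⟨a, ha⟩
  have hpb := congrFun h ⟨b, hb⟩
  simp only [pairTuple, if_neg hab.symm] at hpa hpb
  exact Prod.ext hpa hpb

end pairTuple

theorem simple_join_blowup_general (n d : ℕ)
    (AS AT : Finset (Fin n)) (hST : ¬ AS ⊆ AT) (hTS : ¬ AT ⊆ AS) :
    (d + 1) ^ 2 ≤
      ({t : {j : Fin n // j ∈ AS ∪ AT} → Fin (d + 1) |
        (fun j : {j : Fin n // j ∈ AS} =>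
            t ⟨j.1, Finset.mem_union_left _ j.2⟩) ∈ SimpleRel n d AS ∧
        (fun j : {j : Fin n // j ∈ AT} =>
            t ⟨j.1, Finset.mem_union_right _ j.2⟩) ∈ SimpleRel n d AT}).ncard := by
  obtain ⟨a, haS, haT⟩ := Finset.not_subset.mp hST
  obtain ⟨b, hbT, hbS⟩ := Finset.not_subset.mp hTS
  have hab : a ≠ b := fun h => haT (h ▸ hbT)
  -- The restriction of `pairTuple (AS ∪ AT) a b x y` to `AS` (or `AT`) is `pairTuple AS a b x y`
  -- definitionally, so the membership lemmas apply to it as they stand.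
  calc (d + 1) ^ 2 = (Set.univ : Set (Fin (d + 1) × Fin (d + 1))).ncard := by
        simp [Set.ncard_univ, sq]
    _ ≤ _ := Set.ncard_le_ncard_of_injOn (fun p => pairTuple (AS ∪ AT) a b p.1 p.2)
        (fun p _ => Set.mem_ofPred.mpr ⟨pairTuple_mem_simpleRel_of_notMem_right hbS p.1 p.2,
          pairTuple_mem_simpleRel_of_notMem_left haT p.1 p.2⟩)
        (pairTuple_injective (Finset.mem_union_left _ haS) (Finset.mem_union_right _ hbT)
          hab).injOn

/-- **Quadratic blowup when joining incomparable simple relations.** If `S` and `T` are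
the simple relations on attribute sets `Ā_S` and `Ā_T` respectively, and neither
attribute set contains the other, then `|S ⋈ T| ≥ (d+1)²`. -/
theorem simple_join_blowup (n d : ℕ) (hn : 2 ≤ n) (hd : 1 ≤ d)
    (AS AT : Finset (Fin n)) (hST : ¬ AS ⊆ AT) (hTS : ¬ AT ⊆ AS) :
    (d + 1) ^ 2 ≤
      ({t : {j : Fin n // j ∈ AS ∪ AT} → Fin (d + 1) |
        (fun j : {j : Fin n // j ∈ AS} =>
            t ⟨j.1, Finset.mem_union_left _ j.2⟩) ∈ SimpleRel n d AS ∧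
        (fun j : {j : Fin n // j ∈ AT} =>
            t ⟨j.1, Finset.mem_union_right _ j.2⟩) ∈ SimpleRel n d AT}).ncard :=
  simple_join_blowup_general n d AS AT hST hTS
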